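/- arXiv:1807.01590 — 7 statements merged into one kernel-verified Lean document; each statement's English description precedes it below -/
import Mathlib

section
/- Let H : ℝⁿ × ℝ × ℝⁿ → ℝ be a jointly convex, twice continuously differentiable function, with arguments written (x, v, p). Let Ω ⊆ ℝⁿ be open and v : Ω → ℝ be three times continuously differentiable with H(x, v(x), ∇v(x)) = 0 for all x ∈ Ω. Let T > 0 and let x : [0,T] → Ω be a differentiable curve satisfying the characteristic equation x′(s) = ∇_p H(x(s), v(x(s)), ∇v(x(s))) for all s ∈ [0,T]. Fix ξ ∈ ℝⁿ and set q(s) := ⟨ξ, D²v(x(s)) ξ⟩. Then for every s ∈ [0,T], q(s) ≤ q(0) · exp(−∫₀ˢ ∂_v H(x(τ), v(x(τ)), ∇v(x(τ))) dτ). -/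
open Set Filter Topology

noncomputable section

abbrev Euc (n : ℕ) := EuclideanSpace ℝ (Fin n)

/-- The real inner product. -/
noncomputable def rinner {n : ℕ} (x y : Euc n) : ℝ := inner ℝ x y

/-!
Fix `y ∈ Ω`, let `J = oneJet v`, i.e. `J z = (z, v z, ∇v z)`, and let `L` be the derivative
of `H` at `J y`. Convexity puts `H` above its tangent hyperplane at `J y`, and `H ∘ J` vanishes
on `Ω`, so `z ↦ L (J z)` attains its maximum over `Ω` at `y`. Its second derivative in the
direction `ξ` is therefore nonpositive, which reads `∂ᵥH · ⟨ξ, D²v ξ⟩ + ⟨∇ₚH, D³v(ξ, ξ)⟩ ≤ 0`.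
Along a characteristic the second term is `q'` (by the symmetry of `D³v`), so
`q' + (∂ᵥH) q ≤ 0`, and the integrating factor `exp ∫ ∂ᵥH` makes `q · exp ∫ ∂ᵥH` nonincreasing.
-/

open InnerProductSpace

section Calculus

variable {E : Type*} [NormedAddCommGroup E] [NormedSpace ℝ E]

theorem IsLocalMax.deriv_deriv_nonpos {f : ℝ → ℝ} {t₀ : ℝ} (h : IsLocalMax f t₀)
    (hc : ContinuousAt f t₀) : deriv (deriv f) t₀ ≤ 0 := by
  by_contra! hpos
  -- if `f'' > 0`, the second-derivative test makes `t₀` also a local minimum, so `f` is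
  -- locally constant
  have hmin := isLocalMin_of_deriv_deriv_pos hpos h.deriv_eq_zero hc
  have hconst : f =ᶠ[𝓝 t₀] fun _ => f t₀ := by
    filter_upwards [h, hmin] with t h₁ h₂ using le_antisymm h₁ h₂
  have hderiv : deriv f =ᶠ[𝓝 t₀] fun _ => 0 := by
    filter_upwards [hconst.eventuallyEq_nhds] with t ht
    rw [ht.deriv_eq, deriv_const]
  simp [hderiv.deriv_eq] at hpos

theorem IsLocalMax.secondDeriv_apply_self_nonpos {f : E → ℝ} {f' : E → E →L[ℝ] ℝ}
    {φ : E →L[ℝ] ℝ} {y ξ : E} (h : IsLocalMax f y)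
    (hf : ∀ᶠ z in 𝓝 y, HasFDerivAt f (f' z) z) (hφ : HasFDerivAt (fun z => f' z ξ) φ y) :
    φ ξ ≤ 0 := by
  set γ : ℝ → E := fun t => y + t • ξ
  have hγ : ∀ t, HasDerivAt γ ξ t := fun t =>
    (((hasDerivAt_id t).smul_const ξ).const_add y).congr_deriv (one_smul ℝ ξ)
  have hγ0 : γ 0 = y := by simp [γ]
  have hγy : Tendsto γ (𝓝 0) (𝓝 y) := hγ0 ▸ (hγ 0).continuousAt.tendsto
  have hderiv : deriv (f ∘ γ) =ᶠ[𝓝 0] fun t => f' (γ t) ξ := by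
    filter_upwards [hγy.eventually hf] with t ht using (ht.comp_hasDerivAt t (hγ t)).deriv
  have hφγ : HasDerivAt (fun t => f' (γ t) ξ) (φ ξ) 0 := by
    rw [← hγ0] at hφ
    exact hφ.comp_hasDerivAt 0 (hγ 0)
  rw [← hφγ.deriv, ← hderiv.deriv_eq]
  refine (hγ0 ▸ h).comp_continuous (hγ 0).continuousAt |>.deriv_deriv_nonpos ?_
  exact (hγ0 ▸ hf.self_of_nhds).continuousAt.comp (hγ 0).continuousAt

theorem ConvexOn.add_apply_sub_le_of_hasFDerivAt {s : Set E} {f : E → ℝ} {f' : E →L[ℝ] ℝ}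
    {x y : E} (hf : ConvexOn ℝ s f) (hx : x ∈ s) (hy : y ∈ s) (hf' : HasFDerivAt f f' x) :
    f x + f' (y - x) ≤ f y := by
  have hseg : ConvexOn ℝ (Icc (0 : ℝ) 1) (f ∘ AffineMap.lineMap x y) :=
    (hf.comp_affineMap _).subset (fun t ht => hf.1.lineMap_mem hx hy ht) (convex_Icc 0 1)
  have hderiv : HasDerivAt (f ∘ AffineMap.lineMap x y) (f' (y - x)) (0 : ℝ) := by
    rw [← AffineMap.lineMap_apply_zero (k := ℝ) x y] at hf'
    exact hf'.comp_hasDerivAt (0 : ℝ) AffineMap.hasDerivAt_lineMap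
  have := hseg.le_slope_of_hasDerivAt (by simp) (by simp) zero_lt_one hderiv
  simp only [slope, Function.comp_apply, AffineMap.lineMap_apply_one,
    AffineMap.lineMap_apply_zero, sub_zero, inv_one, one_smul, vsub_eq_sub] at this
  linarith

theorem le_mul_exp_neg_integral_of_deriv_add_mul_nonpos {q q' c : ℝ → ℝ} {a b : ℝ}
    (hc : ContinuousOn c (Icc a b)) (hq : ContinuousOn q (Icc a b))
    (hq' : ∀ s ∈ Ioo a b, HasDerivAt q (q' s) s)
    (hle : ∀ s ∈ Ioo a b, q' s + c s * q s ≤ 0) :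
    ∀ s ∈ Icc a b, q s ≤ q a * Real.exp (-∫ τ in a..s, c τ) := by
  intro s hs
  set I : ℝ → ℝ := fun s => ∫ τ in a..s, c τ
  have hab : a ≤ b := hs.1.trans hs.2
  have hI : ContinuousOn I (Icc a b) := by
    simpa [uIcc_of_le hab] using intervalIntegral.continuousOn_primitive_interval'
      (hc.intervalIntegrable_of_Icc hab) left_mem_uIcc
  have hI' : ∀ t ∈ Ioo a b, HasDerivAt I (c t) t := fun t ht =>
    intervalIntegral.integral_hasDerivAt_right
      ((hc.mono (Icc_subset_Icc_right ht.2.le)).intervalIntegrable_of_Icc ht.1.le)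
      ((hc.mono Ioo_subset_Icc_self).stronglyMeasurableAtFilter isOpen_Ioo t ht)
      (hc.continuousAt (Icc_mem_nhds ht.1 ht.2))
  have hanti : AntitoneOn (fun t => q t * Real.exp (I t)) (Icc a b) := by
    refine antitoneOn_of_deriv_nonpos (convex_Icc a b) (hq.mul hI.rexp) ?_ ?_ <;>
      rw [interior_Icc]
    · exact fun t ht => ((hq' t ht).mul (hI' t ht).exp).differentiableAt.differentiableWithinAt
    · intro t ht
      have hr : HasDerivAt (fun t => q t * Real.exp (I t))
          (q' t * Real.exp (I t) + q t * (Real.exp (I t) * c t)) t :=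
        (hq' t ht).mul (hI' t ht).exp
      rw [hr.deriv]
      nlinarith [hle t ht, Real.exp_pos (I t)]
  have := hanti ⟨le_rfl, hab⟩ hs hs.1
  simp only [I, intervalIntegral.integral_same, Real.exp_zero, mul_one] at this
  rwa [Real.exp_neg, ← div_eq_mul_inv, le_div_iff₀ (Real.exp_pos _)]

theorem deriv_snd_eq_fderiv_apply {F : Type*} [NormedAddCommGroup F] [NormedSpace ℝ F]
    {K : F × ℝ × E → ℝ} {a : F} {b : ℝ} {p : E} (hK : DifferentiableAt ℝ K (a, b, p)) :
    deriv (fun t => K (a, t, p)) b = fderiv ℝ K (a, b, p) (0, 1, 0) :=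
  (hK.hasFDerivAt.comp_hasDerivAt b
    ((hasDerivAt_const b a).prodMk ((hasDerivAt_id b).prodMk (hasDerivAt_const b p)))).deriv

end Calculus

section Gradient

variable {E : Type*} [NormedAddCommGroup E] [InnerProductSpace ℝ E] [CompleteSpace E]
  {v : E → ℝ} {y : E}

theorem contDiffAt_gradient {n m : WithTop ℕ∞} (hv : ContDiffAt ℝ n v y) (hmn : m + 1 ≤ n) :
    ContDiffAt ℝ m (gradient v) y :=
  (toDual ℝ E).symm.contDiff.contDiffAt.comp y (hv.fderiv_right hmn)

theorem ContDiffAt.hasFDerivAt_fderiv_gradient (hv : ContDiffAt ℝ 3 v y) :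
    HasFDerivAt (fderiv ℝ (gradient v)) (fderiv ℝ (fderiv ℝ (gradient v)) y) y :=
  (((contDiffAt_gradient (m := 2) hv (by norm_num)).fderiv_right (m := 1)
    (by norm_num)).differentiableAt (by norm_num)).hasFDerivAt

theorem inner_fderiv_gradient_comm (hv : ContDiffAt ℝ 2 v y) (a b : E) :
    ⟪a, fderiv ℝ (gradient v) y b⟫_ℝ = ⟪b, fderiv ℝ (gradient v) y a⟫_ℝ := by
  have hdual : fderiv ℝ v = toDual ℝ E ∘ gradient v :=
    funext fun z => ((toDual ℝ E).apply_symm_apply _).symm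
  have hsymm := hv.isSymmSndFDerivAt (by simp [minSmoothness_of_isRCLikeNormedField]) b a
  rw [hdual, LinearIsometryEquiv.comp_fderiv] at hsymm
  have hinner : ∀ p q : E, ((toDual ℝ E : E →L⋆[ℝ] StrongDual ℝ E).comp
      (fderiv ℝ (gradient v) y)) p q = ⟪fderiv ℝ (gradient v) y p, q⟫_ℝ :=
    fun _ _ => toDual_apply_apply
  rw [hinner, hinner] at hsymm
  rw [real_inner_comm, hsymm, real_inner_comm]

theorem inner_fderiv_fderiv_gradient_comm (hv : ContDiffAt ℝ 3 v y) (a b c : E) :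
    ⟪a, fderiv ℝ (fderiv ℝ (gradient v)) y b c⟫_ℝ =
      ⟪b, fderiv ℝ (fderiv ℝ (gradient v)) y a c⟫_ℝ := by
  set B := fderiv ℝ (fderiv ℝ (gradient v)) y
  have hderiv : ∀ a b : E, HasFDerivAt (fun z => ⟪a, fderiv ℝ (gradient v) z b⟫_ℝ)
      ((innerSL ℝ a).comp ((ContinuousLinearMap.apply ℝ E b).comp B)) y := fun a b =>
    (innerSL ℝ a).hasFDerivAt.comp y
      ((ContinuousLinearMap.apply ℝ E b).hasFDerivAt.comp y hv.hasFDerivAt_fderiv_gradient)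
  -- the Hessian is self-adjoint near `y`, so its derivative inherits the symmetry in `a, b`
  have hnear : (fun z => ⟪a, fderiv ℝ (gradient v) z b⟫_ℝ) =ᶠ[𝓝 y]
      fun z => ⟪b, fderiv ℝ (gradient v) z a⟫_ℝ := by
    filter_upwards [hv.eventually (by simp)] with z hz
    exact inner_fderiv_gradient_comm (hz.of_le (by norm_num)) a b
  have hca := congrArg (· c) ((hderiv a b).unique ((hderiv b a).congr_of_eventuallyEq hnear))
  have hB := (contDiffAt_gradient (m := 2) hv (by norm_num)).isSymmSndFDerivAt
    (by simp [minSmoothness_of_isRCLikeNormedField])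
  rw [hB b c, hB a c]
  simpa using hca

theorem HasDerivAt.inner_fderiv_gradient_comp {x : ℝ → E} {x' : E} {s : ℝ}
    (hv : ContDiffAt ℝ 3 v (x s)) (hx : HasDerivAt x x' s) (ξ : E) :
    HasDerivAt (fun τ => ⟪ξ, fderiv ℝ (gradient v) (x τ) ξ⟫_ℝ)
      ⟪x', fderiv ℝ (fderiv ℝ (gradient v)) (x s) ξ ξ⟫_ℝ s := by
  have h := ((innerSL ℝ ξ).hasFDerivAt.comp (x s)
    ((ContinuousLinearMap.apply ℝ E ξ).hasFDerivAt.comp (x s)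
      hv.hasFDerivAt_fderiv_gradient)).comp_hasDerivAt s hx
  rw [← inner_fderiv_fderiv_gradient_comm hv]
  exact h

end Gradient

section HamiltonJacobi

variable {E : Type*} [NormedAddCommGroup E] [InnerProductSpace ℝ E] [CompleteSpace E]

def oneJet (v : E → ℝ) (z : E) : E × ℝ × E := (z, v z, gradient v z)

variable {H : E × ℝ × E → ℝ} {v : E → ℝ} {Ω : Set E} {y : E}

theorem hasFDerivAt_oneJet (hv : ContDiffAt ℝ 2 v y) :
    HasFDerivAt (oneJet v) ((ContinuousLinearMap.id ℝ E).prod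
      ((toDual ℝ E (gradient v y)).prod (fderiv ℝ (gradient v) y))) y :=
  (hasFDerivAt_id y).prodMk
    ((hv.differentiableAt (by norm_num)).hasGradientAt.hasFDerivAt.prodMk
      ((contDiffAt_gradient (m := 1) hv (by norm_num)).differentiableAt
        (by norm_num)).hasFDerivAt)

theorem inner_gradient_thd_eq_fderiv_apply {F : Type*} [NormedAddCommGroup F]
    [NormedSpace ℝ F] {K : F × ℝ × E → ℝ} {a : F} {b : ℝ} {p : E}
    (hK : DifferentiableAt ℝ K (a, b, p)) (w : E) :
    ⟪gradient (fun p => K (a, b, p)) p, w⟫_ℝ = fderiv ℝ K (a, b, p) (0, 0, w) := by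
  have hslice : HasFDerivAt (fun q : E => ((a, b, q) : F × ℝ × E))
      ((0 : E →L[ℝ] F).prod ((0 : E →L[ℝ] ℝ).prod (ContinuousLinearMap.id ℝ E))) p :=
    (hasFDerivAt_const a p).prodMk ((hasFDerivAt_const b p).prodMk (hasFDerivAt_id p))
  have hd : HasFDerivAt (fun q => K (a, b, q)) _ p := hK.hasFDerivAt.comp p hslice
  rw [gradient, hd.fderiv, toDual_symm_apply]
  simp

theorem isMaxOn_fderiv_apply_oneJet (hconv : ConvexOn ℝ univ H)
    (hH : DifferentiableAt ℝ H (oneJet v y)) (hHJ : ∀ z ∈ Ω, H (oneJet v z) = 0)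
    (hy : y ∈ Ω) :
    IsMaxOn (fun z => fderiv ℝ H (oneJet v y) (oneJet v z)) Ω y := by
  intro z hz
  have := hconv.add_apply_sub_le_of_hasFDerivAt (mem_univ _) (mem_univ (oneJet v z))
    hH.hasFDerivAt
  rw [map_sub, hHJ y hy, hHJ z hz] at this
  simp only [mem_ofPred_eq]
  linarith

theorem fderiv_apply_secondDeriv_oneJet_nonpos (hconv : ConvexOn ℝ univ H)
    (hH : DifferentiableAt ℝ H (oneJet v y)) (hHJ : ∀ z ∈ Ω, H (oneJet v z) = 0)
    (hΩ : Ω ∈ 𝓝 y) (hv : ContDiffAt ℝ 3 v y) (ξ : E) :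
    fderiv ℝ H (oneJet v y) (0, ⟪ξ, fderiv ℝ (gradient v) y ξ⟫_ℝ,
      fderiv ℝ (fderiv ℝ (gradient v)) y ξ ξ) ≤ 0 := by
  set L := fderiv ℝ H (oneJet v y)
  set B := fderiv ℝ (fderiv ℝ (gradient v)) y
  set A := fderiv ℝ (gradient v)
  have hmax : IsLocalMax (fun z => L (oneJet v z)) y :=
    (isMaxOn_fderiv_apply_oneJet hconv hH hHJ (mem_of_mem_nhds hΩ)).isLocalMax hΩ
  have hfirst : ∀ᶠ z in 𝓝 y, HasFDerivAt (fun z => L (oneJet v z)) (L.comp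
      ((ContinuousLinearMap.id ℝ E).prod ((toDual ℝ E (gradient v z)).prod (A z)))) z := by
    filter_upwards [hv.eventually (by simp)] with z hz
    exact L.hasFDerivAt.comp z (hasFDerivAt_oneJet (hz.of_le (by norm_num)))
  have hsecond : HasFDerivAt (fun z => L (ξ, ⟪ξ, gradient v z⟫_ℝ, A z ξ))
      (L.comp ((0 : E →L[ℝ] E).prod (((innerSL ℝ ξ).comp (A y)).prod
        ((ContinuousLinearMap.apply ℝ E ξ).comp B)))) y :=
    L.hasFDerivAt.comp y ((hasFDerivAt_const ξ y).prodMk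
      (((innerSL ℝ ξ).hasFDerivAt.comp y
        ((contDiffAt_gradient (m := 1) hv (by norm_num)).differentiableAt
          (by norm_num)).hasFDerivAt).prodMk
      ((ContinuousLinearMap.apply ℝ E ξ).hasFDerivAt.comp y hv.hasFDerivAt_fderiv_gradient)))
  have h := hmax.secondDeriv_apply_self_nonpos hfirst (ξ := ξ)
    (by simpa [real_inner_comm] using hsecond)
  simpa using h

theorem inner_gradient_add_deriv_mul_nonpos (hconv : ConvexOn ℝ univ H)
    (hH : DifferentiableAt ℝ H (oneJet v y)) (hHJ : ∀ z ∈ Ω, H (oneJet v z) = 0)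
    (hΩ : Ω ∈ 𝓝 y) (hv : ContDiffAt ℝ 3 v y) (ξ : E) :
    ⟪gradient (fun p => H (y, v y, p)) (gradient v y),
        fderiv ℝ (fderiv ℝ (gradient v)) y ξ ξ⟫_ℝ +
      deriv (fun t => H (y, t, gradient v y)) (v y) * ⟪ξ, fderiv ℝ (gradient v) y ξ⟫_ℝ ≤ 0 := by
  have h := fderiv_apply_secondDeriv_oneJet_nonpos hconv hH hHJ hΩ hv ξ
  rw [inner_gradient_thd_eq_fderiv_apply hH, deriv_snd_eq_fderiv_apply hH]
  set r := ⟪ξ, fderiv ℝ (gradient v) y ξ⟫_ℝ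
  set w := fderiv ℝ (fderiv ℝ (gradient v)) y ξ ξ
  have hsplit : ((0 : E), r, w) = r • ((0 : E), (1 : ℝ), (0 : E)) + (0, 0, w) := by simp
  rw [hsplit, map_add, map_smul, smul_eq_mul] at h
  unfold oneJet at h
  linarith

end HamiltonJacobi

theorem hamilton_jacobi_second_derivative_gronwall_general {n : ℕ}
    (H : Euc n × ℝ × Euc n → ℝ) (hH : ContDiff ℝ 2 H)
    (hHconv : ConvexOn ℝ univ H)
    (Ω : Set (Euc n)) (hΩ : IsOpen Ω)
    (v : Euc n → ℝ) (hv : ContDiffOn ℝ 3 v Ω)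
    (hHJ : ∀ x ∈ Ω, H (x, v x, gradient v x) = 0)
    (T : ℝ) (x : ℝ → Euc n)
    (hxΩ : ∀ s ∈ Icc (0 : ℝ) T, x s ∈ Ω)
    (hchar : ∀ s ∈ Icc (0 : ℝ) T,
      HasDerivAt x (gradient (fun p => H (x s, v (x s), p)) (gradient v (x s))) s)
    (ξ : Euc n) :
    ∀ s ∈ Icc (0 : ℝ) T,
      rinner ξ (fderiv ℝ (gradient v) (x s) ξ) ≤
        rinner ξ (fderiv ℝ (gradient v) (x 0) ξ) *
          Real.exp (-(∫ τ in (0 : ℝ)..s,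
            deriv (fun t => H (x τ, t, gradient v (x τ))) (v (x τ)))) := by
  have hv₃ : ∀ s ∈ Icc (0 : ℝ) T, ContDiffAt ℝ 3 v (x s) := fun s hs =>
    hv.contDiffAt (hΩ.mem_nhds (hxΩ s hs))
  have hHd : Differentiable ℝ H := hH.differentiable (by norm_num)
  have hjet : ContinuousOn (fun τ => oneJet v (x τ)) (Icc 0 T) := fun s hs =>
    (hasFDerivAt_oneJet ((hv₃ s hs).of_le (by norm_num))).continuousAt.comp_continuousWithinAt
      (hchar s hs).continuousAt.continuousWithinAt
  have hc : ContinuousOn (fun τ => deriv (fun t => H (x τ, t, gradient v (x τ))) (v (x τ)))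
      (Icc 0 T) :=
    (((hH.continuous_fderiv (by norm_num)).comp_continuousOn hjet).clm_apply
      continuousOn_const).congr fun τ _ => deriv_snd_eq_fderiv_apply (hHd _)
  have hq : ∀ s ∈ Icc (0 : ℝ) T, HasDerivAt (fun τ => ⟪ξ, fderiv ℝ (gradient v) (x τ) ξ⟫_ℝ)
      ⟪gradient (fun p => H (x s, v (x s), p)) (gradient v (x s)),
        fderiv ℝ (fderiv ℝ (gradient v)) (x s) ξ ξ⟫_ℝ s := fun s hs =>
    (hchar s hs).inner_fderiv_gradient_comp (hv₃ s hs) ξ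
  exact le_mul_exp_neg_integral_of_deriv_add_mul_nonpos hc
    (fun s hs => (hq s hs).continuousAt.continuousWithinAt)
    (fun s hs => hq s (Ioo_subset_Icc_self hs))
    fun s hs => inner_gradient_add_deriv_mul_nonpos hHconv (hHd _) hHJ
      (hΩ.mem_nhds (hxΩ s (Ioo_subset_Icc_self hs))) (hv₃ s (Ioo_subset_Icc_self hs)) ξ

/-- monotonicity (with an explicit exponential rate) of the second
derivative `q(s) = ⟨ξ, D²v(x(s)) ξ⟩` of a `C³` solution `v` of the Hamilton-Jacobi
equation `H(x, v, ∇v) = 0` with jointly convex `C²` Hamiltonian, along a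
characteristic curve `x(s)`. -/
theorem hamilton_jacobi_second_derivative_gronwall {n : ℕ}
    (H : Euc n × ℝ × Euc n → ℝ) (hH : ContDiff ℝ 2 H)
    (hHconv : ConvexOn ℝ univ H)
    (Ω : Set (Euc n)) (hΩ : IsOpen Ω)
    (v : Euc n → ℝ) (hv : ContDiffOn ℝ 3 v Ω)
    (hHJ : ∀ x ∈ Ω, H (x, v x, gradient v x) = 0)
    (T : ℝ) (hT : 0 < T) (x : ℝ → Euc n)
    (hxΩ : ∀ s ∈ Icc (0 : ℝ) T, x s ∈ Ω)
    (hchar : ∀ s ∈ Icc (0 : ℝ) T,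
      HasDerivAt x (gradient (fun p => H (x s, v (x s), p)) (gradient v (x s))) s)
    (ξ : Euc n) :
    ∀ s ∈ Icc (0 : ℝ) T,
      rinner ξ (fderiv ℝ (gradient v) (x s) ξ) ≤
        rinner ξ (fderiv ℝ (gradient v) (x 0) ξ) *
          Real.exp (-(∫ τ in (0 : ℝ)..s,
            deriv (fun t => H (x τ, t, gradient v (x τ))) (v (x τ)))) :=
  hamilton_jacobi_second_derivative_gronwall_general H hH hHconv Ω hΩ v hv hHJ T x hxΩ hchar ξ
end
end

section
/- Let K ⊆ ℝⁿ be a compact convex set with 0 in its interior whose gauge γ is strictly convex, let γ° be the gauge of the polar K°, let U ⊆ ℝⁿ be a bounded open set with nonempty boundary, and let φ : ℝⁿ → ℝ be continuous and satisfy the strict Lipschitz property. Let u : closure(U) → ℝ be continuous, differentiable at every point of U with γ°(∇u(z)) ≤ 1 for all z ∈ U, satisfying u ≤ ρ on closure(U) and u = φ on ∂U. If x ∈ U satisfies u(x) = ρ(x), then x has a unique ρ-closest point on ∂U; that is, there do not exist two distinct points y, z ∈ ∂U with ρ(x) = γ(x − y) + φ(y) = γ(x − z) + φ(z). -/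
open Set Filter Topology MeasureTheory
open scoped NNReal

noncomputable section

/-- The polar set `K° = {x | ⟨x, y⟩ ≤ 1 for all y ∈ K}`. -/
def polarSet {n : ℕ} (K : Set (Euc n)) : Set (Euc n) :=
  {x | ∀ y ∈ K, rinner x y ≤ 1}

/-- `rho K U φ x = min_{y ∈ ∂U} (γ_K(x - y) + φ y)`. -/
noncomputable def rho {n : ℕ} (K U : Set (Euc n)) (φ : Euc n → ℝ) (x : Euc n) : ℝ :=
  sInf ((fun y => gauge K (x - y) + φ y) '' frontier U)

/-- `rhoBar K U φ x = min_{y ∈ ∂U} (γ_K(y - x) - φ y)`. -/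
noncomputable def rhoBar {n : ℕ} (K U : Set (Euc n)) (φ : Euc n → ℝ) (x : Euc n) : ℝ :=
  sInf ((fun y => gauge K (y - x) - φ y) '' frontier U)

/-- `φ` satisfies the strict Lipschitz property with respect to the gauge of `K`. -/
def StrictLipschitzWrt {n : ℕ} (K : Set (Euc n)) (φ : Euc n → ℝ) : Prop :=
  ∀ x y : Euc n, x ≠ y → -gauge K (y - x) < φ x - φ y ∧ φ x - φ y < gauge K (x - y)

/-- The gauge of `K` is strictly convex: `γ(x+y) < γ(x) + γ(y)` unless
`x = c • y` or `y = c • x` for some `c ≥ 0`. -/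
def StrictlyConvexGauge {n : ℕ} (K : Set (Euc n)) : Prop :=
  ∀ x y : Euc n, (¬ ∃ c : ℝ, 0 ≤ c ∧ (x = c • y ∨ y = c • x)) →
    gauge K (x + y) < gauge K x + gauge K y

/-! At a touching point `x`, the gradient `p = ∇u(x)` satisfies `γ(x - y) ≤ ⟨p, x - y⟩` for
every `ρ`-closest point `y`: along the segment from `x` to `y`, `u ≤ ρ ≤ γ(· - y) + φ y` drops at
rate `γ(x - y)`, while `u x = ρ x`. On the other hand `γ°(p) ≤ 1` means `⟨p, ·⟩ ≤ γ`. Two closest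
points `y, z` therefore give `γ(x - y) + γ(x - z) ≤ γ((x - y) + (x - z))`, so by strict convexity
`x - y` and `x - z` are nonnegatively parallel. Then one of `y, z` lies strictly between `x` and
the other, which the strict Lipschitz property of `φ` forbids for a point of `∂U`. -/

theorem HasFDerivAt.apply_le_of_eventually_le {E : Type*} [NormedAddCommGroup E]
    [NormedSpace ℝ E] {f : E → ℝ} {f' : E →L[ℝ] ℝ} {x v : E} {c : ℝ} (hf : HasFDerivAt f f' x)
    (h : ∀ᶠ t in 𝓝[>] (0 : ℝ), f (x + t • v) ≤ f x + t * c) : f' v ≤ c := by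
  have hline : HasDerivAt (fun t : ℝ => x + t • v) v 0 := by
    simpa using ((hasDerivAt_id (0 : ℝ)).smul_const v).const_add x
  have hg : HasDerivAt (fun t : ℝ => f (x + t • v)) (f' v) 0 :=
    hf.comp_hasDerivAt_of_eq 0 hline (by simp)
  refine le_of_tendsto (hg.tendsto_slope.mono_left (nhdsGT_le_nhdsNE 0)) ?_
  filter_upwards [h, self_mem_nhdsWithin] with t ht (htpos : 0 < t)
  rw [slope_def_field, zero_smul, add_zero, sub_zero, div_le_iff₀ htpos]
  linarith

theorem mem_openSegment_of_sub_eq_smul_sub {E : Type*} [AddCommGroup E] [Module ℝ E]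
    {x y z : E} {c : ℝ} (hc : c ∈ Ioo 0 1) (h : x - y = c • (x - z)) :
    y ∈ openSegment ℝ x z := by
  rw [openSegment_eq_image']
  refine ⟨c, hc, ?_⟩
  change x + c • (z - x) = y
  rw [← neg_sub x z, smul_neg, ← h]
  abel

section

variable {n : ℕ} {K U : Set (Euc n)} {φ : Euc n → ℝ}

theorem isClosed_polarSet (K : Set (Euc n)) : IsClosed (polarSet K) := by
  simp only [polarSet, ofPred_forall]
  exact isClosed_biInter fun y _ => isClosed_le (continuous_id.inner continuous_const)
    continuous_const

theorem convex_polarSet (K : Set (Euc n)) : Convex ℝ (polarSet K) := by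
  intro a ha b hb s t hs ht hst y hy
  have h1 := ha y hy
  have h2 := hb y hy
  simp only [rinner, inner_add_left, real_inner_smul_left] at *
  nlinarith

theorem polarSet_mem_nhds_zero (hK : Bornology.IsBounded K) : polarSet K ∈ 𝓝 (0 : Euc n) := by
  obtain ⟨R, hR0, hR⟩ := hK.exists_pos_norm_le
  refine Filter.mem_of_superset (Metric.closedBall_mem_nhds 0 (inv_pos.2 hR0)) fun p hp y hy => ?_
  rw [mem_closedBall_zero_iff] at hp
  calc rinner p y ≤ ‖p‖ * ‖y‖ := real_inner_le_norm p y
    _ ≤ R⁻¹ * R := mul_le_mul hp (hR y hy) (norm_nonneg _) (inv_nonneg.2 hR0.le)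
    _ = 1 := inv_mul_cancel₀ hR0.ne'

theorem mem_polarSet_of_gauge_le_one (hK : Bornology.IsBounded K) {p : Euc n}
    (hp : gauge (polarSet K) p ≤ 1) : p ∈ polarSet K := by
  rw [gauge_le_one_iff_mem_closure (convex_polarSet K) (polarSet_mem_nhds_zero hK),
    (isClosed_polarSet K).closure_eq] at hp
  exact hp

theorem inner_le_gauge_of_mem_polarSet (hK : Absorbent ℝ K) {p : Euc n} (hp : p ∈ polarSet K)
    (v : Euc n) : inner ℝ p v ≤ gauge K v := by
  refine le_of_forall_gt fun r hr => ?_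
  obtain ⟨b, hb0, hbr, k, hk, rfl⟩ := exists_lt_of_gauge_lt hK hr
  calc inner ℝ p (b • k) = b * rinner p k := real_inner_smul_right p k b
    _ ≤ b * 1 := mul_le_mul_of_nonneg_left (hp k hk) hb0.le
    _ < r := by linarith

def IsRhoClosestPoint (K U : Set (Euc n)) (φ : Euc n → ℝ) (x y : Euc n) : Prop :=
  y ∈ frontier U ∧ rho K U φ x = gauge K (x - y) + φ y

theorem StrictLipschitzWrt.le_gauge_sub_add (hφ : StrictLipschitzWrt K φ) (x y : Euc n) :
    φ x ≤ gauge K (x - y) + φ y := by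
  rcases eq_or_ne y x with rfl | hyx
  · simp
  · linarith [(hφ y x hyx).1]

/-- `φ x` bounds the defining set of `rho` from below, so its `sInf` is not the junk value. -/
theorem rho_le (hφ : StrictLipschitzWrt K φ) {y : Euc n} (hy : y ∈ frontier U) (x : Euc n) :
    rho K U φ x ≤ gauge K (x - y) + φ y :=
  csInf_le ⟨φ x, forall_mem_image.2 fun z _ => hφ.le_gauge_sub_add x z⟩ (mem_image_of_mem _ hy)

theorem IsRhoClosestPoint.notMem_frontier_of_mem_openSegment (hφ : StrictLipschitzWrt K φ)
    {x y w : Euc n} (hy : IsRhoClosestPoint K U φ x y) (hxy : x ≠ y)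
    (hw : w ∈ openSegment ℝ x y) : w ∉ frontier U := by
  intro hwU
  rw [openSegment_eq_image'] at hw
  obtain ⟨t, ⟨ht0, ht1⟩, rfl⟩ := hw
  have hxw : x - (x + t • (y - x)) = t • (x - y) := by module
  have hwy : x + t • (y - x) - y = (1 - t) • (x - y) := by module
  have hwy_ne : x + t • (y - x) ≠ y := by
    rw [← sub_ne_zero, hwy]
    exact smul_ne_zero (by linarith) (sub_ne_zero.2 hxy)
  have hlip := (hφ _ _ hwy_ne).2
  have hρ := rho_le hφ hwU x
  rw [hxw, gauge_smul_of_nonneg ht0.le] at hρ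
  rw [hwy, gauge_smul_of_nonneg (by linarith)] at hlip
  simp only [smul_eq_mul] at hρ hlip
  linarith [hy.2]

theorem IsRhoClosestPoint.eq_of_sub_eq_smul_sub (hφ : StrictLipschitzWrt K φ) {x y z : Euc n}
    (hx : x ∉ frontier U) (hy : IsRhoClosestPoint K U φ x y) (hz : IsRhoClosestPoint K U φ x z)
    {c : ℝ} (hc : 0 ≤ c) (h : x - y = c • (x - z)) : y = z := by
  have hxy : x ≠ y := fun hxy => hx (hxy ▸ hy.1)
  have hxz : x ≠ z := fun hxz => hx (hxz ▸ hz.1)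
  have hc0 : c ≠ 0 := by
    rintro rfl
    exact hxy (sub_eq_zero.1 (by simpa using h))
  rcases lt_trichotomy c 1 with hc1 | rfl | hc1
  · exact absurd hy.1 <| hz.notMem_frontier_of_mem_openSegment hφ hxz <|
      mem_openSegment_of_sub_eq_smul_sub ⟨lt_of_le_of_ne hc (Ne.symm hc0), hc1⟩ h
  · simpa using h
  · have h' : x - z = c⁻¹ • (x - y) := by rw [h, inv_smul_smul₀ hc0]
    exact absurd hz.1 <| hy.notMem_frontier_of_mem_openSegment hφ hxy <|
      mem_openSegment_of_sub_eq_smul_sub ⟨inv_pos.2 (by linarith), inv_lt_one_of_one_lt₀ hc1⟩ h'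

theorem IsRhoClosestPoint.gauge_le_inner_gradient (hφ : StrictLipschitzWrt K φ)
    {u : Euc n → ℝ} {x y : Euc n} (hu : DifferentiableAt ℝ u x)
    (hle : ∀ᶠ z in 𝓝 x, u z ≤ rho K U φ z) (htouch : u x = rho K U φ x)
    (hy : IsRhoClosestPoint K U φ x y) :
    gauge K (x - y) ≤ inner ℝ (gradient u x) (x - y) := by
  have hline : Tendsto (fun t : ℝ => x + t • (y - x)) (𝓝[>] 0) (𝓝 x) :=
    tendsto_nhdsWithin_of_tendsto_nhds <|
      (by fun_prop : Continuous fun t : ℝ => x + t • (y - x)).tendsto' 0 x (by simp)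
  have hdecay : ∀ᶠ t in 𝓝[>] (0 : ℝ),
      u (x + t • (y - x)) ≤ u x + t * -gauge K (x - y) := by
    filter_upwards [hline.eventually hle, Ioo_mem_nhdsGT (zero_lt_one' ℝ)] with t hut ⟨ht0, ht1⟩
    have hwy : x + t • (y - x) - y = (1 - t) • (x - y) := by module
    have hρ := rho_le hφ hy.1 (x + t • (y - x))
    rw [hwy, gauge_smul_of_nonneg (by linarith), smul_eq_mul] at hρ
    linarith [hy.2]
  have hderiv := (hasGradientAt_iff_hasFDerivAt.1 hu.hasGradientAt).apply_le_of_eventually_le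
    hdecay
  rw [InnerProductSpace.toDual_apply_apply, ← neg_sub x y, inner_neg_right] at hderiv
  linarith

end

theorem touching_point_unique_closest_general {n : ℕ}
    (K : Set (Euc n)) (hKcpt : IsCompact K)
    (hK0 : (0 : Euc n) ∈ interior K) (hKstrict : StrictlyConvexGauge K)
    (U : Set (Euc n)) (hUopen : IsOpen U)
    (φ : Euc n → ℝ) (hφlip : StrictLipschitzWrt K φ)
    (u : Euc n → ℝ)
    (hudiff : ∀ z ∈ U, DifferentiableAt ℝ u z)
    (hugauge : ∀ z ∈ U, gauge (polarSet K) (gradient u z) ≤ 1)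
    (hule : ∀ z ∈ closure U, u z ≤ rho K U φ z)
    (x : Euc n) (hx : x ∈ U) (htouch : u x = rho K U φ x) :
    ¬ ∃ y z : Euc n, y ∈ frontier U ∧ z ∈ frontier U ∧ y ≠ z ∧
      rho K U φ x = gauge K (x - y) + φ y ∧
      rho K U φ x = gauge K (x - z) + φ z := by
  rintro ⟨y, z, hyU, hzU, hyz, hminy, hminz⟩
  have hy : IsRhoClosestPoint K U φ x y := ⟨hyU, hminy⟩
  have hz : IsRhoClosestPoint K U φ x z := ⟨hzU, hminz⟩
  have hxU : x ∉ frontier U := fun h => h.2 (hUopen.interior_eq.symm ▸ hx)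
  have hle : ∀ᶠ w in 𝓝 x, u w ≤ rho K U φ w :=
    Filter.mem_of_superset (hUopen.mem_nhds hx) fun w hw => hule w (subset_closure hw)
  set p := gradient u x
  have hp : p ∈ polarSet K := mem_polarSet_of_gauge_le_one hKcpt.isBounded (hugauge x hx)
  have hsum : gauge K (x - y) + gauge K (x - z) ≤ gauge K ((x - y) + (x - z)) :=
    calc gauge K (x - y) + gauge K (x - z) ≤ inner ℝ p (x - y) + inner ℝ p (x - z) :=
          add_le_add (hy.gauge_le_inner_gradient hφlip (hudiff x hx) hle htouch)
            (hz.gauge_le_inner_gradient hφlip (hudiff x hx) hle htouch)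
      _ = inner ℝ p ((x - y) + (x - z)) := (inner_add_right _ _ _).symm
      _ ≤ gauge K ((x - y) + (x - z)) := inner_le_gauge_of_mem_polarSet
          (absorbent_nhds_zero (mem_interior_iff_mem_nhds.1 hK0)) hp _
  obtain ⟨c, hc, hpar | hpar⟩ : ∃ c : ℝ, 0 ≤ c ∧ (x - y = c • (x - z) ∨ x - z = c • (x - y)) := by
    by_contra hnot
    exact (hKstrict _ _ hnot).not_ge hsum
  · exact hyz (hy.eq_of_sub_eq_smul_sub hφlip hxU hz hc hpar)
  · exact hyz (hz.eq_of_sub_eq_smul_sub hφlip hxU hy hc hpar).symm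

/-- if `u` (continuous, differentiable in `U`, with `γ°(∇u) ≤ 1`, lying
below `ρ`, equal to `φ` on `∂U`) touches the obstacle `ρ` at `x ∈ U`, then `x` has a
unique `ρ`-closest point on `∂U`: there are no two distinct `ρ`-closest points. -/
theorem touching_point_unique_closest {n : ℕ}
    (K : Set (Euc n)) (hKcpt : IsCompact K) (hKconv : Convex ℝ K)
    (hK0 : (0 : Euc n) ∈ interior K) (hKstrict : StrictlyConvexGauge K)
    (U : Set (Euc n)) (hUopen : IsOpen U) (hUbdd : Bornology.IsBounded U)
    (hUfr : (frontier U).Nonempty)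
    (φ : Euc n → ℝ) (hφcont : Continuous φ) (hφlip : StrictLipschitzWrt K φ)
    (u : Euc n → ℝ) (hucont : ContinuousOn u (closure U))
    (hudiff : ∀ z ∈ U, DifferentiableAt ℝ u z)
    (hugauge : ∀ z ∈ U, gauge (polarSet K) (gradient u z) ≤ 1)
    (hule : ∀ z ∈ closure U, u z ≤ rho K U φ z)
    (hubd : EqOn u φ (frontier U))
    (x : Euc n) (hx : x ∈ U) (htouch : u x = rho K U φ x) :
    ¬ ∃ y z : Euc n, y ∈ frontier U ∧ z ∈ frontier U ∧ y ≠ z ∧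
      rho K U φ x = gauge K (x - y) + φ y ∧
      rho K U φ x = gauge K (x - z) + φ z :=
  touching_point_unique_closest_general K hKcpt hK0 hKstrict U hUopen φ hφlip u hudiff hugauge hule
    x hx htouch
end
end

section
/- Let K ⊆ ℝⁿ be a compact convex set with 0 in its interior, γ its gauge and γ° the gauge of the polar K°. Let U ⊆ ℝⁿ be a bounded open set with nonempty boundary, and let φ : ℝⁿ → ℝ be continuous and satisfy the strict Lipschitz property. Let u : closure(U) → ℝ be continuous, differentiable at every point of U with γ°(∇u(z)) ≤ 1 for all z ∈ U, satisfying u ≤ ρ on closure(U) and u = φ on ∂U. If x ∈ U satisfies u(x) = ρ(x) and y ∈ ∂U is a ρ-closest point to x, then u(z) = ρ(z) for every z in the half-open segment [x, y) = {x + t(y − x) : 0 ≤ t < 1}. -/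
open Set Filter Topology MeasureTheory
open scoped NNReal

noncomputable section

/-!
Let `z ∈ [x, y)`. The bound `γ°(∇u) ≤ 1` means that `⟨∇u, v⟩ ≤ γ(v)`, so by the mean value
theorem `u(x) - u(z) ≤ γ(x - z)`, while `ρ(z) ≤ γ(z - y) + φ(y)`. As `γ` is additive along the
segment and `u(x) = ρ(x) = γ(x - y) + φ(y)`, this gives `ρ(z) ≤ u(z)`. The mean value theorem needs
`[x, y) ⊆ U`: a point of `[x, y)` on `∂U` would, by the strict Lipschitz property, be strictly
`ρ`-closer to `x` than `y`.
-/

section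

variable {E : Type*} [AddCommGroup E] [Module ℝ E]

theorem segment_subset_segment_diff_singleton {x y w : E} (hw : w ∈ segment ℝ x y \ {y}) :
    segment ℝ x w ⊆ segment ℝ x y \ {y} := by
  intro v hv
  refine ⟨(convex_segment x y).segment_subset (left_mem_segment ℝ x y) hw.1 hv, ?_⟩
  rintro rfl
  exact hw.2 <| (wbtw_swap_right_iff ℝ x).1
    ⟨mem_segment_iff_wbtw.1 hw.1, mem_segment_iff_wbtw.1 hv⟩

theorem segment_diff_singleton_subset [TopologicalSpace E] [IsTopologicalAddGroup E]
    [ContinuousSMul ℝ E] {U : Set E} {x y : E} (hU : IsOpen U) (hx : x ∈ U)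
    (hfr : Disjoint (segment ℝ x y \ {y}) (frontier U)) :
    segment ℝ x y \ {y} ⊆ U := by
  intro w hw
  have hsub := segment_subset_segment_diff_singleton hw
  refine (convex_segment x w).isPreconnected.subset_of_closure_inter_subset hU
    ⟨x, left_mem_segment ℝ x w, hx⟩ ?_ (right_mem_segment ℝ x w)
  rintro v ⟨hvU, hv⟩
  by_contra hvU'
  exact hfr.ne_of_mem (hsub hv) ⟨hvU, by rwa [hU.interior_eq]⟩ rfl

theorem gauge_sub_add_gauge_sub_of_mem_segment (K : Set E) {x y w : E}
    (hw : w ∈ segment ℝ x y) : gauge K (x - w) + gauge K (w - y) = gauge K (x - y) := by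
  obtain ⟨a, b, ha, hb, hab, rfl⟩ := hw
  obtain rfl : a = 1 - b := by linarith
  rw [show x - ((1 - b) • x + b • y) = b • (x - y) by module,
    show (1 - b) • x + b • y - y = (1 - b) • (x - y) by module,
    gauge_smul_of_nonneg hb, gauge_smul_of_nonneg ha, smul_eq_mul, smul_eq_mul]
  ring

theorem le_gauge_of_forall_le_one {s : Set E} (hs : Absorbent ℝ s) (f : E →ₗ[ℝ] ℝ)
    (hf : ∀ w ∈ s, f w ≤ 1) (v : E) : f v ≤ gauge s v := by
  by_contra! hlt
  obtain ⟨b, hb, hbv, q, hq, rfl⟩ := exists_lt_of_gauge_lt hs hlt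
  rw [map_smul, smul_eq_mul] at hbv
  nlinarith [hf q hq]

end

theorem sub_le_of_fderiv_le_on_segment {E : Type*} [NormedAddCommGroup E] [NormedSpace ℝ E]
    {f : E → ℝ} {a b : E} {C : ℝ} (hf : ∀ z ∈ segment ℝ a b, DifferentiableAt ℝ f z)
    (hC : ∀ z ∈ segment ℝ a b, fderiv ℝ f z (a - b) ≤ C) : f a - f b ≤ C := by
  obtain ⟨z, hz, hmvt⟩ := domain_mvt (fun z hz => (hf z hz).hasFDerivAt.hasFDerivWithinAt)
    (convex_segment a b) (right_mem_segment ℝ a b) (left_mem_segment ℝ a b)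
  rw [hmvt]
  exact hC z (segment_symm ℝ a b ▸ hz)

section

variable {n : ℕ} {K : Set (Euc n)}

theorem absorbent_polarSet (hK : Bornology.IsBounded K) : Absorbent ℝ (polarSet K) := by
  obtain ⟨r, hr, hKr⟩ := hK.subset_closedBall_lt 0 0
  refine absorbent_nhds_zero (mem_of_superset (Metric.closedBall_mem_nhds 0 (inv_pos.2 hr)) ?_)
  intro q hq w hw
  have hq' : ‖q‖ ≤ r⁻¹ := by simpa using hq
  have hw' : ‖w‖ ≤ r := by simpa using hKr hw
  calc rinner q w ≤ ‖q‖ * ‖w‖ := real_inner_le_norm q w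
    _ ≤ r⁻¹ * r := mul_le_mul hq' hw' (norm_nonneg _) (by positivity)
    _ = 1 := inv_mul_cancel₀ hr.ne'

theorem rinner_le_gauge_of_gauge_polarSet_le_one (hKb : Bornology.IsBounded K)
    (hKabs : Absorbent ℝ K) {p : Euc n} (hp : gauge (polarSet K) p ≤ 1) (v : Euc n) :
    rinner p v ≤ gauge K v := by
  refine le_gauge_of_forall_le_one hKabs (innerₗ (Euc n) p) (fun w hw => ?_) v
  calc innerₗ (Euc n) p w = innerₗ (Euc n) w p := real_inner_comm w p
    _ ≤ gauge (polarSet K) p :=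
      le_gauge_of_forall_le_one (absorbent_polarSet hKb) _ (fun q hq => (real_inner_comm q w).le.trans (hq w hw)) p
    _ ≤ 1 := hp

theorem sub_le_gauge_of_gauge_polarSet_gradient_le_one (hKb : Bornology.IsBounded K)
    (hKabs : Absorbent ℝ K) {f : Euc n → ℝ} {a b : Euc n}
    (hf : ∀ z ∈ segment ℝ a b, DifferentiableAt ℝ f z)
    (hgrad : ∀ z ∈ segment ℝ a b, gauge (polarSet K) (gradient f z) ≤ 1) :
    f a - f b ≤ gauge K (a - b) :=
  sub_le_of_fderiv_le_on_segment hf fun z hz => by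
    rw [← inner_gradient_left]
    exact rinner_le_gauge_of_gauge_polarSet_le_one hKb hKabs (hgrad z hz) _

variable {φ : Euc n → ℝ}

theorem StrictLipschitzWrt.sub_le (hφ : StrictLipschitzWrt K φ) (a b : Euc n) :
    φ a - φ b ≤ gauge K (a - b) := by
  rcases eq_or_ne a b with rfl | hab
  · simp
  · exact (hφ a b hab).2.le

theorem StrictLipschitzWrt.gauge_sub_add_lt_of_mem_segment (hφ : StrictLipschitzWrt K φ)
    {x y w : Euc n} (hw : w ∈ segment ℝ x y) (hwy : w ≠ y) :
    gauge K (x - w) + φ w < gauge K (x - y) + φ y := by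
  rw [← gauge_sub_add_gauge_sub_of_mem_segment K hw]
  linarith [(hφ w y hwy).2]

theorem rho_le_gauge_sub_add (hKconv : Convex ℝ K) (hKabs : Absorbent ℝ K)
    (hφ : StrictLipschitzWrt K φ) {U : Set (Euc n)} {z : Euc n} (hz : z ∈ frontier U)
    (w : Euc n) : rho K U φ w ≤ gauge K (w - z) + φ z := by
  refine csInf_le ⟨φ z - gauge K (z - w), ?_⟩ ⟨z, hz, rfl⟩
  rintro _ ⟨z', -, rfl⟩
  have htri := gauge_add_le hKconv hKabs (z - w) (w - z')
  rw [sub_add_sub_cancel] at htri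
  linarith [hφ.sub_le z z']

end

theorem segment_is_plastic_general {n : ℕ}
    (K : Set (Euc n)) (hKcpt : IsCompact K) (hKconv : Convex ℝ K)
    (hK0 : (0 : Euc n) ∈ interior K)
    (U : Set (Euc n)) (hUopen : IsOpen U)
    (φ : Euc n → ℝ) (hφlip : StrictLipschitzWrt K φ)
    (u : Euc n → ℝ)
    (hudiff : ∀ z ∈ U, DifferentiableAt ℝ u z)
    (hugauge : ∀ z ∈ U, gauge (polarSet K) (gradient u z) ≤ 1)
    (hule : ∀ z ∈ closure U, u z ≤ rho K U φ z)
    (x : Euc n) (hx : x ∈ U) (htouch : u x = rho K U φ x)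
    (y : Euc n) (hy : y ∈ frontier U)
    (hclosest : rho K U φ x = gauge K (x - y) + φ y) :
    ∀ t : ℝ, 0 ≤ t → t < 1 →
      u (x + t • (y - x)) = rho K U φ (x + t • (y - x)) := by
  intro t ht0 ht1
  have hKabs : Absorbent ℝ K := absorbent_nhds_zero (mem_interior_iff_mem_nhds.1 hK0)
  have hxy : x ≠ y := by
    rintro rfl
    exact (hUopen.inter_frontier_eq.subset ⟨hx, hy⟩).elim
  set z := x + t • (y - x)
  have hz : z ∈ segment ℝ x y \ {y} := by
    refine ⟨segment_eq_image' ℝ x y ▸ ⟨t, ⟨ht0, ht1.le⟩, rfl⟩, fun hzy => ?_⟩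
    have : (1 - t) • (y - x) = y - z := by simp only [z]; module
    rw [(hzy : z = y), sub_self] at this
    exact hxy (sub_eq_zero.1 ((smul_eq_zero.1 this).resolve_left (by linarith))).symm
  have hsegU : segment ℝ x y \ {y} ⊆ U :=
    segment_diff_singleton_subset hUopen hx <| Set.disjoint_left.2 fun w hw hwU =>
      (rho_le_gauge_sub_add hKconv hKabs hφlip hwU x).not_gt
        (hclosest ▸ hφlip.gauge_sub_add_lt_of_mem_segment hw.1 hw.2)
  have hxz : segment ℝ x z ⊆ U := (segment_subset_segment_diff_singleton hz).trans hsegU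
  have hlower : u x - u z ≤ gauge K (x - z) :=
    sub_le_gauge_of_gauge_polarSet_gradient_le_one hKcpt.isBounded hKabs
      (fun w hw => hudiff w (hxz hw)) (fun w hw => hugauge w (hxz hw))
  have hupper := rho_le_gauge_sub_add hKconv hKabs hφlip hy z
  have hsplit := gauge_sub_add_gauge_sub_of_mem_segment K hz.1
  linarith [hule z (subset_closure (hsegU hz))]

/-- if `u` (continuous, differentiable in `U`, with `γ°(∇u) ≤ 1`, lying
below `ρ` and equal to `φ` on `∂U`) touches the obstacle `ρ` at `x ∈ U`, and `y ∈ ∂U`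
is a `ρ`-closest point to `x`, then `u = ρ` along the half-open segment `[x, y)`. -/
theorem segment_is_plastic {n : ℕ}
    (K : Set (Euc n)) (hKcpt : IsCompact K) (hKconv : Convex ℝ K)
    (hK0 : (0 : Euc n) ∈ interior K)
    (U : Set (Euc n)) (hUopen : IsOpen U) (hUbdd : Bornology.IsBounded U)
    (hUfr : (frontier U).Nonempty)
    (φ : Euc n → ℝ) (hφcont : Continuous φ) (hφlip : StrictLipschitzWrt K φ)
    (u : Euc n → ℝ) (hucont : ContinuousOn u (closure U))
    (hudiff : ∀ z ∈ U, DifferentiableAt ℝ u z)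
    (hugauge : ∀ z ∈ U, gauge (polarSet K) (gradient u z) ≤ 1)
    (hule : ∀ z ∈ closure U, u z ≤ rho K U φ z)
    (hubd : EqOn u φ (frontier U))
    (x : Euc n) (hx : x ∈ U) (htouch : u x = rho K U φ x)
    (y : Euc n) (hy : y ∈ frontier U)
    (hclosest : rho K U φ x = gauge K (x - y) + φ y) :
    ∀ t : ℝ, 0 ≤ t → t < 1 →
      u (x + t • (y - x)) = rho K U φ (x + t • (y - x)) :=
  segment_is_plastic_general K hKcpt hKconv hK0 U hUopen φ hφlip u hudiff hugauge hule x hx htouch y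
    hy hclosest
end
end

section
/- Let C ⊆ ℝⁿ be a compact convex set with 0 in its interior and let γ_C be its gauge. Let p ∈ ℝⁿ with γ_C(p) < 1, let ν ∈ ℝⁿ, and let λ > 0 be such that μ := p + λν satisfies γ_C(μ) = 1. If γ_C is differentiable at μ, then ⟨∇γ_C(μ), ν⟩ > 0. -/
/-! The gauge is convex, so its tangent plane at `μ` lies below its graph: evaluated at `p`,
`γ_C(μ) + ⟨∇γ_C(μ), p - μ⟩ ≤ γ_C(p) < 1 = γ_C(μ)`. As `μ - p = λν` with `λ > 0`, this gives
`⟨∇γ_C(μ), ν⟩ > 0`. -/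

open Set

noncomputable section

theorem convexOn_gauge {E : Type*} [AddCommGroup E] [Module ℝ E] {s : Set E}
    (hs : Convex ℝ s) (habs : Absorbent ℝ s) : ConvexOn ℝ univ (gauge s) := by
  refine ⟨convex_univ, fun x _ y _ a b ha hb _ => ?_⟩
  calc gauge s (a • x + b • y) ≤ gauge s (a • x) + gauge s (b • y) := gauge_add_le hs habs _ _
    _ = a • gauge s x + b • gauge s y := by
      rw [gauge_smul_of_nonneg ha, gauge_smul_of_nonneg hb]

theorem ConvexOn.add_fderiv_sub_le {E : Type*} [NormedAddCommGroup E] [NormedSpace ℝ E]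
    {s : Set E} {f : E → ℝ} (hf : ConvexOn ℝ s f) {x y : E} (hx : x ∈ s) (hy : y ∈ s)
    (hd : DifferentiableAt ℝ f x) : f x + fderiv ℝ f x (y - x) ≤ f y := by
  set g : ℝ → ℝ := f ∘ AffineMap.lineMap x y
  have hg : ConvexOn ℝ (AffineMap.lineMap x y ⁻¹' s) g := hf.comp_affineMap _
  have hg' : HasDerivAt g (fderiv ℝ f x (y - x)) 0 := by
    have hd0 : HasFDerivAt f (fderiv ℝ f x) (AffineMap.lineMap x y (0 : ℝ)) := by
      simpa using hd.hasFDerivAt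
    exact hd0.comp_hasDerivAt 0 AffineMap.hasDerivAt_lineMap
  have hslope := hg.le_slope_of_hasDerivAt (by simpa using hx) (by simpa using hy) one_pos hg'
  have hslope_eq : slope g 0 1 = f y - f x := by simp [g, slope_def_field]
  linarith

theorem gauge_gradient_inner_pos_general {n : ℕ}
    (C : Set (Euc n)) (hCconv : Convex ℝ C)
    (hC0 : (0 : Euc n) ∈ interior C)
    (p ν : Euc n) (l : ℝ) (hl : 0 < l)
    (hp : gauge C p < 1) (hμ : gauge C (p + l • ν) = 1)
    (hdiff : DifferentiableAt ℝ (gauge C) (p + l • ν)) :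
    0 < rinner (gradient (gauge C) (p + l • ν)) ν := by
  have habs : Absorbent ℝ C := absorbent_nhds_zero (mem_interior_iff_mem_nhds.mp hC0)
  have htangent := (convexOn_gauge hCconv habs).add_fderiv_sub_le (mem_univ _) (mem_univ p) hdiff
  have hdir : p - (p + l • ν) = -(l • ν) := by abel
  rw [hμ, hdir, map_neg, map_smul, smul_eq_mul] at htangent
  have hinner : rinner (gradient (gauge C) (p + l • ν)) ν = fderiv ℝ (gauge C) (p + l • ν) ν :=
    inner_gradient_left
  rw [hinner]
  exact pos_of_mul_pos_right (by linarith) hl.le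

/-- if `γ_C(p) < 1`, `λ > 0`, `μ = p + λν` satisfies `γ_C(μ) = 1`, and
`γ_C` is differentiable at `μ`, then `⟨∇γ_C(μ), ν⟩ > 0`. -/
theorem gauge_gradient_inner_pos {n : ℕ}
    (C : Set (Euc n)) (hCcpt : IsCompact C) (hCconv : Convex ℝ C)
    (hC0 : (0 : Euc n) ∈ interior C)
    (p ν : Euc n) (l : ℝ) (hl : 0 < l)
    (hp : gauge C p < 1) (hμ : gauge C (p + l • ν) = 1)
    (hdiff : DifferentiableAt ℝ (gauge C) (p + l • ν)) :
    0 < rinner (gradient (gauge C) (p + l • ν)) ν :=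
  gauge_gradient_inner_pos_general C hCconv hC0 p ν l hl hp hμ hdiff
end
end

section
/- Let K ⊆ ℝⁿ be a compact convex set with 0 in its interior, γ its gauge and K° its polar, let U ⊆ ℝⁿ be a bounded open set with nonempty boundary, and let φ : ℝⁿ → ℝ be continuous and satisfy the Lipschitz property −γ(y − x) ≤ φ(x) − φ(y) ≤ γ(x − y) for all x, y. If ρ is differentiable at a point x ∈ ℝⁿ, then ∇ρ(x) ∈ K°; equivalently, γ_{K°}(∇ρ(x)) ≤ 1. -/
open Set Filter Topology MeasureTheory
open scoped NNReal

noncomputable section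

/-! Under the infimum defining `ρ`, the triangle inequality for `γ` gives
`ρ(a) ≤ γ(a - b) + ρ(b)`. Hence every one-sided difference quotient of `ρ` at `x` in a direction
`v` is at most `γ(v)`, so `⟨∇ρ(x), v⟩ ≤ γ(v)`, which is `≤ 1` for `v ∈ K`. -/

section Gauge

variable {E : Type*} [NormedAddCommGroup E] [NormedSpace ℝ E]

theorem fderiv_apply_le_gauge_of_sub_le {f : E → ℝ} {s : Set E} {x : E}
    (hf : DifferentiableAt ℝ f x) (hle : ∀ y, f y - f x ≤ gauge s (y - x)) (v : E) :
    fderiv ℝ f x v ≤ gauge s v := by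
  have hline : HasDerivAt (fun t : ℝ => x + t • v) v 0 := by
    simpa using ((hasDerivAt_id (0 : ℝ)).smul_const v).const_add x
  have hf' : HasFDerivAt f (fderiv ℝ f x) (x + (0 : ℝ) • v) := by
    simpa using hf.hasFDerivAt
  have hslope : Tendsto (slope (fun t : ℝ => f (x + t • v)) 0) (𝓝[>] 0)
      (𝓝 (fderiv ℝ f x v)) :=
    (hasDerivAt_iff_tendsto_slope.mp (hf'.comp_hasDerivAt 0 hline)).mono_left
      (nhdsWithin_mono 0 fun t ht => ne_of_gt ht)
  refine le_of_tendsto hslope ?_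
  filter_upwards [self_mem_nhdsWithin] with t (ht : 0 < t)
  have hstep : f (x + t • v) - f x ≤ t * gauge s v := by
    simpa [gauge_smul_of_nonneg ht.le] using hle (x + t • v)
  rw [slope_def_field, zero_smul, add_zero, sub_zero, div_le_iff₀ ht]
  linarith

end Gauge

section Rho

variable {n : ℕ} {K U : Set (Euc n)} {φ : Euc n → ℝ}

theorem gradient_mem_polarSet_of_sub_le_gauge {f : Euc n → ℝ} {x : Euc n}
    (hf : DifferentiableAt ℝ f x) (hle : ∀ y, f y - f x ≤ gauge K (y - x)) :
    gradient f x ∈ polarSet K := fun y hy => by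
  rw [rinner, inner_gradient_left]
  exact (fderiv_apply_le_gauge_of_sub_le hf hle y).trans (gauge_le_one_of_mem hy)

theorem bddBelow_rho_image (hφ : ∀ x y, φ x - φ y ≤ gauge K (x - y)) (a : Euc n) :
    BddBelow ((fun y => gauge K (a - y) + φ y) '' frontier U) :=
  ⟨φ a, by rintro _ ⟨y, -, rfl⟩; linarith [hφ a y]⟩

theorem rho_le_gauge_add (hKconv : Convex ℝ K) (hK0 : (0 : Euc n) ∈ interior K)
    (hUfr : (frontier U).Nonempty) (hφ : ∀ x y, φ x - φ y ≤ gauge K (x - y)) (a b : Euc n) :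
    rho K U φ a ≤ gauge K (a - b) + rho K U φ b := by
  have habs : Absorbent ℝ K := absorbent_nhds_zero (mem_interior_iff_mem_nhds.mp hK0)
  rw [rho, rho, ← sub_le_iff_le_add']
  refine le_csInf (hUfr.image _) ?_
  rintro _ ⟨y, hy, rfl⟩
  have htri : gauge K (a - y) ≤ gauge K (a - b) + gauge K (b - y) := by
    simpa using gauge_add_le hKconv habs (a - b) (b - y)
  have hρa : sInf ((fun y => gauge K (a - y) + φ y) '' frontier U) ≤ gauge K (a - y) + φ y :=
    csInf_le (bddBelow_rho_image hφ a) ⟨y, hy, rfl⟩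
  linarith

end Rho

theorem gradient_rho_mem_polar_general {n : ℕ}
    (K : Set (Euc n)) (hKconv : Convex ℝ K)
    (hK0 : (0 : Euc n) ∈ interior K)
    (U : Set (Euc n))
    (hUfr : (frontier U).Nonempty)
    (φ : Euc n → ℝ)
    (hφlip : ∀ x y : Euc n,
      -gauge K (y - x) ≤ φ x - φ y ∧ φ x - φ y ≤ gauge K (x - y))
    (x : Euc n) (hdiff : DifferentiableAt ℝ (rho K U φ) x) :
    gradient (rho K U φ) x ∈ polarSet K ∧
      gauge (polarSet K) (gradient (rho K U φ) x) ≤ 1 := by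
  have hmem : gradient (rho K U φ) x ∈ polarSet K :=
    gradient_mem_polarSet_of_sub_le_gauge hdiff fun y => by
      linarith [rho_le_gauge_add hKconv hK0 hUfr (fun a b => (hφlip a b).2) y x]
  exact ⟨hmem, gauge_le_one_of_mem hmem⟩

/-- wherever `ρ` is differentiable, its gradient lies in the polar `K°`;
equivalently the polar gauge of the gradient is at most `1`. -/
theorem gradient_rho_mem_polar {n : ℕ}
    (K : Set (Euc n)) (hKcpt : IsCompact K) (hKconv : Convex ℝ K)
    (hK0 : (0 : Euc n) ∈ interior K)
    (U : Set (Euc n)) (hUopen : IsOpen U) (hUbdd : Bornology.IsBounded U)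
    (hUfr : (frontier U).Nonempty)
    (φ : Euc n → ℝ) (hφcont : Continuous φ)
    (hφlip : ∀ x y : Euc n,
      -gauge K (y - x) ≤ φ x - φ y ∧ φ x - φ y ≤ gauge K (x - y))
    (x : Euc n) (hdiff : DifferentiableAt ℝ (rho K U φ) x) :
    gradient (rho K U φ) x ∈ polarSet K ∧
      gauge (polarSet K) (gradient (rho K U φ) x) ≤ 1 :=
  gradient_rho_mem_polar_general K hKconv hK0 U hUfr φ hφlip x hdiff
end
end

section
/- Let K ⊆ ℝⁿ be a compact convex set with 0 in its interior and let γ be its gauge. Suppose γ is twice continuously differentiable on ℝⁿ ∖ {0}. Then there exists a constant C₂ > 0 such that for every nonzero x ∈ ℝⁿ, every ξ ∈ ℝⁿ with γ(ξ) ≤ 1 and γ(−ξ) ≤ 1, and every h with 0 < h < γ(x): (γ(x + hξ) + γ(x − hξ) − 2γ(x)) / h² ≤ C₂ / (γ(x) − h). -/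
/-! By positive homogeneity, `secondDiffQuot γ (s • x) ξ (s * h) = secondDiffQuot γ x ξ h / s`,
so it suffices to bound the quotient by a constant `C` on the unit sphere `γ x = 1`, which then
gives `C / γ(x) ≤ C / (γ(x) - h)` everywhere. On the unit sphere, for `h ≤ 1/2` the segment
`[x - hξ, x + hξ]` stays in the compact annulus `1/2 ≤ γ ≤ 2`, where the second derivative of `γ`
is bounded, and a second-order Taylor estimate applies; for `h > 1/2` subadditivity alone bounds
the numerator by `2h ≤ 4h²`. -/

open Set

noncomputable section

open Filter Topology

section Taylor

variable {E F : Type*} [NormedAddCommGroup E] [NormedSpace ℝ E] [NormedAddCommGroup F]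
  [NormedSpace ℝ F]

theorem Convex.norm_image_sub_sub_fderiv_le {f : E → F} {f' : E → E →L[ℝ] F}
    {f'' : E → E →L[ℝ] E →L[ℝ] F} {s : Set E} {M : ℝ} (hs : Convex ℝ s)
    (hf : ∀ z ∈ s, HasFDerivWithinAt f (f' z) s z)
    (hf' : ∀ z ∈ s, HasFDerivWithinAt f' (f'' z) s z) (hM : ∀ z ∈ s, ‖f'' z‖ ≤ M)
    {x y : E} (hx : x ∈ s) (hy : y ∈ s) :
    ‖f y - f x - f' x (y - x)‖ ≤ M * ‖y - x‖ ^ 2 := by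
  have hseg : segment ℝ x y ⊆ s := hs.segment_subset hx hy
  have hlip : ∀ z ∈ segment ℝ x y, ‖f' z - f' x‖ ≤ M * ‖y - x‖ := fun z hz =>
    calc ‖f' z - f' x‖ ≤ M * ‖z - x‖ :=
          hs.norm_image_sub_le_of_norm_hasFDerivWithin_le hf' hM hx (hseg hz)
      _ ≤ M * ‖y - x‖ := by
          gcongr
          exacts [(norm_nonneg (f'' x)).trans (hM x hx), norm_sub_le_of_mem_segment hz]
  have hF : ∀ z ∈ segment ℝ x y, HasFDerivWithinAt (fun z => f z - f' x z)
      (f' z - f' x) (segment ℝ x y) z := fun z hz =>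
    ((hf z (hseg hz)).mono hseg).sub (f' x).hasFDerivWithinAt
  have := (convex_segment x y).norm_image_sub_le_of_norm_hasFDerivWithin_le hF hlip
    (left_mem_segment ℝ x y) (right_mem_segment ℝ x y)
  rwa [map_sub, sub_sub_sub_comm, pow_two, ← mul_assoc]

theorem IsCompact.exists_second_difference_le {f : E → ℝ} {U A : Set E} (hU : IsOpen U)
    (hf : ContDiffOn ℝ 2 f U) (hA : IsCompact A) (hAU : A ⊆ U) :
    ∃ M, 0 ≤ M ∧ ∀ x v, segment ℝ (x - v) (x + v) ⊆ A →
      f (x + v) + f (x - v) - 2 * f x ≤ M * ‖v‖ ^ 2 := by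
  have hf' : ContDiffOn ℝ 1 (fderiv ℝ f) U := hf.fderiv_of_isOpen hU (by norm_num)
  obtain ⟨M, hM⟩ := hA.exists_bound_of_continuousOn
    ((hf'.continuousOn_fderiv_of_isOpen hU le_rfl).mono hAU)
  refine ⟨2 * max M 0, by positivity, fun x v hxv => ?_⟩
  have taylor : ∀ y ∈ segment ℝ (x - v) (x + v),
      |f y - f x - fderiv ℝ f x (y - x)| ≤ max M 0 * ‖y - x‖ ^ 2 := fun y hy =>
    (convex_segment _ _).norm_image_sub_sub_fderiv_le
      (fun z hz => ((hf.contDiffAt (hU.mem_nhds (hAU (hxv hz)))).differentiableAt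
        (by norm_num)).hasFDerivAt.hasFDerivWithinAt)
      (fun z hz => ((hf'.contDiffAt (hU.mem_nhds (hAU (hxv hz)))).differentiableAt
        (by norm_num)).hasFDerivAt.hasFDerivWithinAt)
      (fun z hz => (hM z (hxv hz)).trans (le_max_left _ _)) (mem_segment_sub_add x v) hy
  have hplus := taylor (x + v) (right_mem_segment ℝ _ _)
  have hminus := taylor (x - v) (left_mem_segment ℝ _ _)
  simp only [add_sub_cancel_left, sub_sub_cancel_left, map_neg, norm_neg] at hplus hminus
  linarith [(abs_le.mp hplus).2, (abs_le.mp hminus).2]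

end Taylor

section Gauge

variable {E : Type*} [AddCommGroup E] [Module ℝ E] {K : Set E}

theorem gauge_smul_le_of_abs_le_one {v : E} {r t : ℝ} (hv : gauge K v ≤ r)
    (hv' : gauge K (-v) ≤ r) (ht : |t| ≤ 1) : gauge K (t • v) ≤ r := by
  rcases le_or_gt 0 t with ht₀ | ht₀
  · rw [gauge_smul_of_nonneg ht₀, smul_eq_mul]
    nlinarith [gauge_nonneg (s := K) v, (abs_le.mp ht).2]
  · rw [← neg_smul_neg, gauge_smul_of_nonneg (neg_nonneg.2 ht₀.le), smul_eq_mul]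
    nlinarith [gauge_nonneg (s := K) (-v), (abs_le.mp ht).1]

theorem abs_gauge_sub_le_of_mem_segment (hK : Convex ℝ K) (hKa : Absorbent ℝ K) {x v z : E}
    {r : ℝ} (hv : gauge K v ≤ r) (hv' : gauge K (-v) ≤ r)
    (hz : z ∈ segment ℝ (x - v) (x + v)) : |gauge K z - gauge K x| ≤ r := by
  rw [segment_eq_image'] at hz
  obtain ⟨θ, ⟨hθ₀, hθ₁⟩, rfl⟩ := hz
  have hz : x - v + θ • (x + v - (x - v)) = x + (2 * θ - 1) • v := by module
  have hx : x = x + (2 * θ - 1) • v + (1 - 2 * θ) • v := by module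
  have h₁ := gauge_smul_le_of_abs_le_one (t := 2 * θ - 1) hv hv'
    (abs_le.2 ⟨by linarith, by linarith⟩)
  have h₂ := gauge_smul_le_of_abs_le_one (t := 1 - 2 * θ) hv hv'
    (abs_le.2 ⟨by linarith, by linarith⟩)
  have h₃ := gauge_add_le hK hKa x ((2 * θ - 1) • v)
  have h₄ := gauge_add_le hK hKa (x + (2 * θ - 1) • v) ((1 - 2 * θ) • v)
  rw [← hx] at h₄
  beta_reduce
  rw [hz, abs_sub_le_iff]
  constructor <;> linarith

def secondDiffQuot (f : E → ℝ) (x ξ : E) (h : ℝ) : ℝ :=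
  (f (x + h • ξ) + f (x - h • ξ) - 2 * f x) / h ^ 2

theorem secondDiffQuot_gauge_smul (K : Set E) (x ξ : E) {s : ℝ} (hs : 0 ≤ s) (h : ℝ) :
    secondDiffQuot (gauge K) (s • x) ξ (s * h) = secondDiffQuot (gauge K) x ξ h / s := by
  rcases hs.eq_or_lt with rfl | hs
  · simp [secondDiffQuot]
  simp only [secondDiffQuot, mul_smul, ← smul_add, ← smul_sub, gauge_smul_of_nonneg hs.le,
    smul_eq_mul]
  field_simp

end Gauge

section CompactGauge

variable {E : Type*} [NormedAddCommGroup E] [NormedSpace ℝ E] {K : Set E}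

theorem isCompact_setOf_gauge_le (hKc : IsCompact K) (hK : Convex ℝ K) (hK0 : K ∈ 𝓝 0) {r : ℝ}
    (hr : 0 < r) : IsCompact {x | gauge K x ≤ r} := by
  refine (hKc.smul r).of_isClosed_subset
    (isClosed_le (continuous_gauge hK hK0) continuous_const) fun x hx => ?_
  have hmem : r⁻¹ • x ∈ K := by
    rw [← hKc.isClosed.closure_eq, ← gauge_le_one_iff_mem_closure hK hK0,
      gauge_smul_of_nonneg (inv_nonneg.2 hr.le), smul_eq_mul, inv_mul_le_one₀ hr]
    exact hx
  simpa [smul_inv_smul₀ hr.ne'] using smul_mem_smul_set (a := r) hmem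

theorem exists_secondDiffQuot_gauge_le_of_gauge_eq_one (hKc : IsCompact K) (hK : Convex ℝ K)
    (hK0 : K ∈ 𝓝 0) (hC2 : ContDiffOn ℝ 2 (gauge K) {0}ᶜ) :
    ∃ C, 0 < C ∧ ∀ x, gauge K x = 1 → ∀ ξ, gauge K ξ ≤ 1 → gauge K (-ξ) ≤ 1 →
      ∀ h, 0 < h → secondDiffQuot (gauge K) x ξ h ≤ C := by
  set A := {x | gauge K x ≤ 2} ∩ {x | 1 / 2 ≤ gauge K x}
  have hA : IsCompact A := (isCompact_setOf_gauge_le hKc hK hK0 two_pos).inter_right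
    (isClosed_le continuous_const (continuous_gauge hK hK0))
  have hA0 : A ⊆ {0}ᶜ := by
    rintro x ⟨-, hx⟩ rfl
    norm_num [gauge_zero] at hx
  obtain ⟨M, hM0, hM⟩ := hA.exists_second_difference_le isOpen_compl_singleton hC2 hA0
  obtain ⟨R, hR⟩ := hKc.isBounded.exists_norm_le
  refine ⟨M * R ^ 2 + 4, by positivity, fun x hx ξ hξ hξ' h hh => ?_⟩
  have hξR : ‖ξ‖ ≤ R := hR ξ <| by
    rwa [← hKc.isClosed.closure_eq, ← gauge_le_one_iff_mem_closure hK hK0]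
  have hv : gauge K (h • ξ) ≤ h := by
    rw [gauge_smul_of_nonneg hh.le, smul_eq_mul]
    exact mul_le_of_le_one_right hh.le hξ
  have hv' : gauge K (-(h • ξ)) ≤ h := by
    rw [← smul_neg, gauge_smul_of_nonneg hh.le, smul_eq_mul]
    exact mul_le_of_le_one_right hh.le hξ'
  have hseg := fun z (hz : z ∈ segment ℝ (x - h • ξ) (x + h • ξ)) =>
    abs_le.mp (hx ▸ abs_gauge_sub_le_of_mem_segment hK (absorbent_nhds_zero hK0) hv hv' hz)
  have hMR : 0 ≤ M * R ^ 2 * h ^ 2 := by positivity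
  rw [secondDiffQuot, div_le_iff₀ (by positivity), hx]
  rcases le_or_gt h (1 / 2) with hsmall | hlarge
  · have hN := hM x (h • ξ) fun z hz => by
      obtain ⟨hlo, hhi⟩ := hseg z hz
      exact ⟨show gauge K z ≤ 2 by linarith, show 1 / 2 ≤ gauge K z by linarith⟩
    have hv2 : ‖h • ξ‖ ^ 2 ≤ R ^ 2 * h ^ 2 := by
      rw [norm_smul, Real.norm_of_nonneg hh.le, mul_pow, mul_comm]
      gcongr
    nlinarith
  · have h₁ := (hseg _ (left_mem_segment ℝ _ _)).2
    have h₂ := (hseg _ (right_mem_segment ℝ _ _)).2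
    nlinarith

end CompactGauge

/-- if the gauge `γ` of `K` is `C²` away from the origin, then its second
difference quotients satisfy `𝔇²_{h,ξ} γ(x) ≤ C₂ / (γ(x) − h)` uniformly. -/
theorem gauge_second_difference_bound {n : ℕ}
    (K : Set (Euc n)) (hKcpt : IsCompact K) (hKconv : Convex ℝ K)
    (hK0 : (0 : Euc n) ∈ interior K)
    (hKC2 : ContDiffOn ℝ 2 (gauge K) {(0 : Euc n)}ᶜ) :
    ∃ C₂ : ℝ, 0 < C₂ ∧ ∀ x : Euc n, x ≠ 0 →
      ∀ ξ : Euc n, gauge K ξ ≤ 1 → gauge K (-ξ) ≤ 1 →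
        ∀ h : ℝ, 0 < h → h < gauge K x →
          (gauge K (x + h • ξ) + gauge K (x - h • ξ) - 2 * gauge K x) / h ^ 2 ≤
            C₂ / (gauge K x - h) := by
  obtain ⟨C, hC, hunit⟩ := exists_secondDiffQuot_gauge_le_of_gauge_eq_one hKcpt hKconv
    (mem_interior_iff_mem_nhds.mp hK0) hKC2
  refine ⟨C, hC, fun x _ ξ hξ hξ' h hh hhx => ?_⟩
  set s := gauge K x
  have hs : 0 < s := hh.trans hhx
  have hx₁ : gauge K (s⁻¹ • x) = 1 := by
    rw [gauge_smul_of_nonneg (inv_nonneg.2 hs.le), smul_eq_mul, inv_mul_cancel₀ hs.ne']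
  have hscale := secondDiffQuot_gauge_smul K (s⁻¹ • x) ξ hs.le (s⁻¹ * h)
  rw [smul_inv_smul₀ hs.ne', mul_inv_cancel_left₀ hs.ne'] at hscale
  calc secondDiffQuot (gauge K) x ξ h = secondDiffQuot (gauge K) (s⁻¹ • x) ξ (s⁻¹ * h) / s :=
        hscale
    _ ≤ C / s := by gcongr; exact hunit _ hx₁ ξ hξ hξ' _ (by positivity)
    _ ≤ C / (s - h) := by gcongr; linarith
end
end

section
/- Let K ⊆ ℝⁿ be a compact convex set with 0 in its interior and let γ be its gauge. Suppose there exist constants C₀ > 0 and C₂ > 0 such that C₀|x| ≤ γ(x) for all x, and for every nonzero x, every ξ with γ(ξ) ≤ 1 and γ(−ξ) ≤ 1, and every 0 < h < γ(x): (γ(x + hξ) + γ(x − hξ) − 2γ(x)) / h² ≤ C₂ / (γ(x) − h). Let U ⊆ ℝⁿ be a bounded open set with nonempty boundary, let φ : ℝⁿ → ℝ be continuous, and let d(x) denote the Euclidean distance from x to ∂U. Then for every x ∈ U, every ξ with γ(ξ) ≤ 1 and γ(−ξ) ≤ 1, and every h with 0 < h < C₀ d(x): (ρ(x + hξ) + ρ(x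 − hξ) − 2ρ(x)) / h² ≤ C₂ / (C₀ d(x) − h). -/
open Set Filter Topology MeasureTheory
open scoped NNReal

noncomputable section

/-!
Pick a point `y₀ ∈ ∂U` at which the minimum defining `ρ(x)` is attained. Using the same `y₀`
as a competitor for `ρ(x ± hξ)` bounds the second difference of `ρ` at `x` by the second
difference of `γ` at `x - y₀`. Since `γ(x - y₀) ≥ C₀ |x - y₀| ≥ C₀ d(x) > h`, the hypothesis on
`γ` applies there, and its bound `C₂ / (γ(x - y₀) - h)` is at most `C₂ / (C₀ d(x) - h)`.
-/

section Rho

variable {n : ℕ} {K U : Set (Euc n)} {φ : Euc n → ℝ}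

lemma isCompact_rho_image (hγ : Continuous (gauge K)) (hU : IsCompact (frontier U))
    (hφ : Continuous φ) (x : Euc n) :
    IsCompact ((fun y => gauge K (x - y) + φ y) '' frontier U) :=
  hU.image (by fun_prop)

lemma rho_le_of_mem_frontier (hγ : Continuous (gauge K)) (hU : IsCompact (frontier U))
    (hφ : Continuous φ) (x : Euc n) {y : Euc n} (hy : y ∈ frontier U) :
    rho K U φ x ≤ gauge K (x - y) + φ y :=
  csInf_le (isCompact_rho_image hγ hU hφ x).bddBelow (mem_image_of_mem _ hy)

lemma exists_rho_eq (hγ : Continuous (gauge K)) (hU : IsCompact (frontier U))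
    (hne : (frontier U).Nonempty) (hφ : Continuous φ) (x : Euc n) :
    ∃ y ∈ frontier U, gauge K (x - y) + φ y = rho K U φ x :=
  (isCompact_rho_image hγ hU hφ x).sInf_mem (hne.image _)

lemma exists_rho_second_difference_le (hγ : Continuous (gauge K))
    (hU : IsCompact (frontier U)) (hne : (frontier U).Nonempty) (hφ : Continuous φ)
    (x v : Euc n) :
    ∃ y ∈ frontier U, rho K U φ (x + v) + rho K U φ (x - v) - 2 * rho K U φ x ≤
      gauge K (x - y + v) + gauge K (x - y - v) - 2 * gauge K (x - y) := by
  obtain ⟨y, hy, hρx⟩ := exists_rho_eq hγ hU hne hφ x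
  refine ⟨y, hy, ?_⟩
  have hplus := rho_le_of_mem_frontier hγ hU hφ (x + v) hy
  have hminus := rho_le_of_mem_frontier hγ hU hφ (x - v) hy
  rw [add_sub_right_comm] at hplus
  rw [sub_right_comm] at hminus
  linarith

end Rho

theorem rho_second_difference_bound_general {n : ℕ}
    (K : Set (Euc n)) (hKconv : Convex ℝ K)
    (hK0 : (0 : Euc n) ∈ interior K)
    (C₀ : ℝ) (hlow : ∀ x : Euc n, C₀ * ‖x‖ ≤ gauge K x)
    (C₂ : ℝ) (hC₂ : 0 < C₂)
    (hgauge2 : ∀ x : Euc n, x ≠ 0 →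
      ∀ ξ : Euc n, gauge K ξ ≤ 1 → gauge K (-ξ) ≤ 1 →
        ∀ h : ℝ, 0 < h → h < gauge K x →
          (gauge K (x + h • ξ) + gauge K (x - h • ξ) - 2 * gauge K x) / h ^ 2 ≤
            C₂ / (gauge K x - h))
    (U : Set (Euc n)) (hUbdd : Bornology.IsBounded U)
    (φ : Euc n → ℝ) (hφcont : Continuous φ) :
    ∀ x ∈ U, ∀ ξ : Euc n, gauge K ξ ≤ 1 → gauge K (-ξ) ≤ 1 →
      ∀ h : ℝ, 0 < h → h < C₀ * Metric.infDist x (frontier U) →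
        (rho K U φ (x + h • ξ) + rho K U φ (x - h • ξ) - 2 * rho K U φ x) / h ^ 2 ≤
          C₂ / (C₀ * Metric.infDist x (frontier U) - h) := by
  intro x _ ξ hξ hξ' h hh hhd
  set d := Metric.infDist x (frontier U)
  have hC₀d : 0 < C₀ * d := hh.trans hhd
  have hC₀ : 0 < C₀ := pos_of_mul_pos_left hC₀d Metric.infDist_nonneg
  have hd : 0 < d := pos_of_mul_pos_right hC₀d hC₀.le
  -- the distance to an empty set is `0`
  have hne : (frontier U).Nonempty := by
    by_contra hempty
    simp [d, not_nonempty_iff_eq_empty.mp hempty] at hd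
  have hγ : Continuous (gauge K) := continuous_gauge hKconv (mem_interior_iff_mem_nhds.mp hK0)
  have hU : IsCompact (frontier U) :=
    hUbdd.isCompact_closure.of_isClosed_subset isClosed_frontier frontier_subset_closure
  obtain ⟨y, hy, hρ⟩ := exists_rho_second_difference_le hγ hU hne hφcont x (h • ξ)
  have hdy : d ≤ ‖x - y‖ := by
    simpa [dist_eq_norm] using Metric.infDist_le_dist_of_mem (x := x) hy
  have hγy : C₀ * d ≤ gauge K (x - y) :=
    (mul_le_mul_of_nonneg_left hdy hC₀.le).trans (hlow _)
  have hxy : x - y ≠ 0 := norm_pos_iff.mp (hd.trans_le hdy)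
  calc (rho K U φ (x + h • ξ) + rho K U φ (x - h • ξ) - 2 * rho K U φ x) / h ^ 2
      ≤ (gauge K (x - y + h • ξ) + gauge K (x - y - h • ξ) - 2 * gauge K (x - y)) / h ^ 2 := by
        gcongr
    _ ≤ C₂ / (gauge K (x - y) - h) := hgauge2 _ hxy ξ hξ hξ' h hh (hhd.trans_le hγy)
    _ ≤ C₂ / (C₀ * d - h) := div_le_div_of_nonneg_left hC₂.le (by linarith) (by linarith)

/-- the second difference quotient bound for the gauge `γ` transfers to
the obstacle `ρ`: for `x ∈ U`, `γ(±ξ) ≤ 1` and `0 < h < C₀ d(x)` one has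
`𝔇²_{h,ξ} ρ(x) ≤ C₂ / (C₀ d(x) − h)`, where `d` is the Euclidean distance to `∂U`. -/
theorem rho_second_difference_bound {n : ℕ}
    (K : Set (Euc n)) (hKcpt : IsCompact K) (hKconv : Convex ℝ K)
    (hK0 : (0 : Euc n) ∈ interior K)
    (C₀ : ℝ) (hC₀ : 0 < C₀) (hlow : ∀ x : Euc n, C₀ * ‖x‖ ≤ gauge K x)
    (C₂ : ℝ) (hC₂ : 0 < C₂)
    (hgauge2 : ∀ x : Euc n, x ≠ 0 →
      ∀ ξ : Euc n, gauge K ξ ≤ 1 → gauge K (-ξ) ≤ 1 →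
        ∀ h : ℝ, 0 < h → h < gauge K x →
          (gauge K (x + h • ξ) + gauge K (x - h • ξ) - 2 * gauge K x) / h ^ 2 ≤
            C₂ / (gauge K x - h))
    (U : Set (Euc n)) (hUopen : IsOpen U) (hUbdd : Bornology.IsBounded U)
    (hUfr : (frontier U).Nonempty)
    (φ : Euc n → ℝ) (hφcont : Continuous φ) :
    ∀ x ∈ U, ∀ ξ : Euc n, gauge K ξ ≤ 1 → gauge K (-ξ) ≤ 1 →
      ∀ h : ℝ, 0 < h → h < C₀ * Metric.infDist x (frontier U) →
        (rho K U φ (x + h • ξ) + rho K U φ (x - h • ξ) - 2 * rho K U φ x) / h ^ 2 ≤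
          C₂ / (C₀ * Metric.infDist x (frontier U) - h) :=
  rho_second_difference_bound_general K hKconv hK0 C₀ hlow C₂ hC₂ hgauge2 U hUbdd φ hφcont
end
end
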